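/- Let n ≥ 1 and let A be an n×n Perron–Frobenius matrix with spectral radius λ(A). Then the number of indices i for which the row sum ∑_j A_{ij} is at least 2 is at most λ(A)^n − 1, and likewise the number of indices j for which the column sum ∑_i A_{ij} is at least 2 is at most λ(A)^n − 1. -/

import Mathlib

/-! Read `A` as a multidigraph, so that `∑ⱼ (A^t)ᵢⱼ` counts the walks of length `t` from `i`.
Every vertex has out-degree at least one, and each walk ending at a vertex of out-degree at
least two has at least two extensions, so
`∑ⱼ (A^(t+1))ᵢⱼ ≥ ∑ⱼ (A^t)ᵢⱼ + #{w | 2 ≤ ∑ⱼ A w j ∧ 0 < (A^t)ᵢw}`.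
Every vertex is reachable from `i` in fewer than `n` steps, so summing over `t < n` shows that
every row sum of `A^n` is at least `c = #{rows with sum ≥ 2} + 1`. Then the row sums, hence the
`ℓ^∞` operator norm, of `(A^n)^m` are at least `c^m`, and Gelfand's formula gives
`λ(A)^n = λ(A^n) ≥ c`. Columns follow by transposing, which preserves the spectrum. -/

open scoped ENNReal

/-- A Perron–Frobenius matrix: a square matrix with nonnegative integer entries
(entries in `ℕ`) such that some positive power has all entries strictly positive. -/
def IsPerronFrobenius {n : ℕ} (A : Matrix (Fin n) (Fin n) ℕ) : Prop :=
  ∃ k : ℕ, 0 < k ∧ ∀ i j, 0 < (A ^ k) i j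

/-- The spectral radius `λ(A)` of a nonnegative integer matrix, defined as the
spectral radius of the matrix obtained by casting its entries into `ℂ`. -/
noncomputable def matrixSpectralRadius {n : ℕ} (A : Matrix (Fin n) (Fin n) ℕ) : ℝ≥0∞ :=
  spectralRadius ℂ (A.map (Nat.cast : ℕ → ℂ))

open scoped NNReal Matrix
open Finset

namespace Finset

variable {α : Type*} {f : Finset α → Finset α}

theorem isFixedPt_iterate_or_lt_card (hf : ∀ s, s ⊆ f s) {s : Finset α} (hs : s.Nonempty)
    (t : ℕ) : Function.IsFixedPt f (f^[t] s) ∨ t < #(f^[t] s) := by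
  induction t with
  | zero => exact Or.inr hs.card_pos
  | succ t ih =>
    rw [Function.iterate_succ_apply']
    by_cases hfix : Function.IsFixedPt f (f^[t] s)
    · exact Or.inl hfix.apply
    · have hlt : #(f^[t] s) < #(f (f^[t] s)) :=
        card_lt_card ((hf _).ssubset_of_ne (Ne.symm hfix))
      exact Or.inr (by have := ih.resolve_left hfix; omega)

theorem iterate_subset_iterate_card_sub_one [Fintype α] (hf : ∀ s, s ⊆ f s) {s : Finset α}
    (hs : s.Nonempty) (m : ℕ) : f^[m] s ⊆ f^[Fintype.card α - 1] s := by
  rcases isFixedPt_iterate_or_lt_card hf hs (Fintype.card α - 1) with hfix | hcard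
  · calc f^[m] s ⊆ f^[m + (Fintype.card α - 1)] s :=
          Function.monotone_iterate_of_id_le hf (Nat.le_add_right _ _) s
      _ = f^[Fintype.card α - 1] s := by
          rw [Function.iterate_add_apply, Function.iterate_fixed hfix]
  · rw [eq_univ_of_card (f^[Fintype.card α - 1] s) (le_antisymm (card_le_univ _) (by omega))]
    exact subset_univ _

end Finset

namespace Matrix

variable {ι : Type*} [Fintype ι]

theorem sum_mul_apply (P Q : Matrix ι ι ℕ) (i : ι) :
    ∑ j, (P * Q) i j = ∑ l, P i l * ∑ j, Q l j := by
  simp only [mul_apply, mul_sum]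
  exact sum_comm

theorem sum_add_card_le_sum_mul_apply (P A : Matrix ι ι ℕ) (hA : ∀ l, 0 < ∑ j, A l j) (i : ι) :
    ∑ l, P i l + #{l | 2 ≤ ∑ j, A l j ∧ 0 < P i l} ≤ ∑ j, (P * A) i j := by
  rw [sum_mul_apply, card_filter, ← sum_add_distrib]
  refine sum_le_sum fun l _ => ?_
  have := hA l
  split_ifs with h
  · nlinarith [h.1, h.2]
  · simpa using Nat.le_mul_of_pos_right (P i l) (hA l)

variable [DecidableEq ι]

theorem pow_succ_apply_pos_iff (A : Matrix ι ι ℕ) (k : ℕ) (i j : ι) :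
    0 < (A ^ (k + 1)) i j ↔ ∃ l, 0 < (A ^ k) i l ∧ 0 < A l j := by
  simp [pow_succ, mul_apply, Finset.sum_pos_iff, CanonicallyOrderedAdd.mul_pos]

def reachStep (A : Matrix ι ι ℕ) (s : Finset ι) : Finset ι :=
  s ∪ univ.filter fun j => ∃ i ∈ s, 0 < A i j

theorem mem_reachStep_iterate (A : Matrix ι ι ℕ) (i : ι) (t : ℕ) (j : ι) :
    j ∈ (reachStep A)^[t] {i} ↔ ∃ k ≤ t, 0 < (A ^ k) i j := by
  induction t generalizing j with
  | zero => by_cases h : i = j <;> simp [h, eq_comm]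
  | succ t ih =>
    simp only [Function.iterate_succ_apply', reachStep, mem_union, mem_filter, mem_univ, true_and,
      ih]
    constructor
    · rintro (⟨k, hk, h⟩ | ⟨l, ⟨k, hk, hl⟩, hlj⟩)
      · exact ⟨k, by omega, h⟩
      · exact ⟨k + 1, by omega, (pow_succ_apply_pos_iff A k i j).2 ⟨l, hl, hlj⟩⟩
    · rintro ⟨k, hk, h⟩
      rcases Nat.lt_or_ge k (t + 1) with hk' | hk'
      · exact Or.inl ⟨k, by omega, h⟩
      · obtain rfl : k = t + 1 := by omega
        obtain ⟨l, hl, hlj⟩ := (pow_succ_apply_pos_iff A t i j).1 h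
        exact Or.inr ⟨l, ⟨t, le_rfl, hl⟩, hlj⟩

theorem exists_pow_apply_pos_lt_card (A : Matrix ι ι ℕ) {i j : ι} {m : ℕ}
    (h : 0 < (A ^ m) i j) : ∃ k < Fintype.card ι, 0 < (A ^ k) i j := by
  have hsub := Finset.iterate_subset_iterate_card_sub_one (f := reachStep A)
    (fun _ => subset_union_left) (singleton_nonempty i) m
  obtain ⟨k, hk, hpos⟩ := (mem_reachStep_iterate A i _ j).1
    (hsub ((mem_reachStep_iterate A i m j).2 ⟨m, le_rfl, h⟩))
  have : 0 < Fintype.card ι := Fintype.card_pos_iff.2 ⟨i⟩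
  exact ⟨k, by omega, hpos⟩

theorem card_add_one_le_sum_pow_apply (A : Matrix ι ι ℕ) (hA : ∀ l, 0 < ∑ j, A l j) {N : ℕ}
    {i : ι} (hreach : ∀ j, ∃ k < N, 0 < (A ^ k) i j) :
    #{l | 2 ≤ ∑ j, A l j} + 1 ≤ ∑ j, (A ^ N) i j := by
  have hgrowth : ∀ t, 1 + ∑ k ∈ range t, #{l | 2 ≤ ∑ j, A l j ∧ 0 < (A ^ k) i l} ≤
      ∑ j, (A ^ t) i j := by
    intro t
    induction t with
    | zero => simp [one_apply]
    | succ t ih =>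
      have := sum_add_card_le_sum_mul_apply (A ^ t) A hA i
      rw [sum_range_succ, pow_succ]
      omega
  have hcover : ({l | 2 ≤ ∑ j, A l j} : Finset ι) ⊆
      (range N).biUnion fun k => {l | 2 ≤ ∑ j, A l j ∧ 0 < (A ^ k) i l} := by
    intro l hl
    obtain ⟨k, hk, hpos⟩ := hreach l
    simp only [mem_biUnion, mem_range, mem_filter, mem_univ, true_and] at hl ⊢
    exact ⟨k, hk, hl, hpos⟩
  have := (card_le_card hcover).trans card_biUnion_le
  have := hgrowth N
  omega

theorem pow_le_sum_pow_apply (B : Matrix ι ι ℕ) {c : ℕ} (hc : ∀ i, c ≤ ∑ j, B i j) (m : ℕ)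
    (i : ι) : c ^ m ≤ ∑ j, (B ^ m) i j := by
  induction m generalizing i with
  | zero => simp [one_apply]
  | succ m ih =>
    calc c ^ (m + 1) = c * c ^ m := pow_succ' c m
      _ ≤ (∑ l, B i l) * c ^ m := Nat.mul_le_mul_right _ (hc i)
      _ = ∑ l, B i l * c ^ m := sum_mul _ _ _
      _ ≤ ∑ l, B i l * ∑ j, (B ^ m) l j := sum_le_sum fun l _ => Nat.mul_le_mul_left _ (ih l)
      _ = ∑ j, (B ^ (m + 1)) i j := by rw [pow_succ', sum_mul_apply]

theorem map_natCast_pow (A : Matrix ι ι ℕ) (m : ℕ) :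
    A.map (Nat.cast : ℕ → ℂ) ^ m = (A ^ m).map Nat.cast :=
  (Matrix.map_pow A (Nat.castRingHom ℂ) m).symm

end Matrix

theorem spectrum.spectralRadius_pow {𝕜 A : Type*} [NormedField 𝕜] [IsAlgClosed 𝕜] [Ring A]
    [Algebra 𝕜 A] (a : A) {n : ℕ} (hn : n ≠ 0) :
    spectralRadius 𝕜 (a ^ n) = spectralRadius 𝕜 a ^ n := by
  refine le_antisymm ?_ (spectrum.spectralRadius_pow_le a n hn)
  rw [spectralRadius, spectrum.map_pow_of_pos a (Nat.pos_of_ne_zero hn)]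
  refine iSup₂_le ?_
  rintro _ ⟨z, hz, rfl⟩
  rw [nnnorm_pow, ENNReal.coe_pow]
  exact pow_le_pow_left' (le_iSup₂ (f := fun k (_ : k ∈ spectrum 𝕜 a) => (‖k‖₊ : ℝ≥0∞)) z hz) n

theorem spectrum.le_spectralRadius_of_pow_le_nnnorm_pow {A : Type*} [NormedRing A]
    [NormedAlgebra ℂ A] [CompleteSpace A] (a : A) {c : ℝ≥0} (h : ∀ m, c ^ m ≤ ‖a ^ m‖₊) :
    (c : ℝ≥0∞) ≤ spectralRadius ℂ a := by
  refine ge_of_tendsto (spectrum.pow_nnnorm_pow_one_div_tendsto_nhds_spectralRadius a)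
    (Filter.eventually_atTop.2 ⟨1, fun m hm => ?_⟩)
  have hm' : (m : ℝ) ≠ 0 := by positivity
  calc (c : ℝ≥0∞) = ((c : ℝ≥0∞) ^ m) ^ (1 / m : ℝ) := by
        rw [← ENNReal.rpow_natCast, ← ENNReal.rpow_mul, mul_one_div_cancel hm', ENNReal.rpow_one]
    _ ≤ (‖a ^ m‖₊ : ℝ≥0∞) ^ (1 / m : ℝ) :=
        ENNReal.rpow_le_rpow (by exact_mod_cast h m) (by positivity)

namespace Matrix

variable {ι : Type*} [Fintype ι] [DecidableEq ι]

theorem spectrum_transpose {R : Type*} [CommRing R] (B : Matrix ι ι R) :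
    spectrum R Bᵀ = spectrum R B := by
  ext z
  have h : (algebraMap R (Matrix ι ι R) z - B)ᵀ = algebraMap R _ z - Bᵀ := by
    rw [transpose_sub, algebraMap_eq_diagonal, diagonal_transpose]
  rw [spectrum.mem_iff, spectrum.mem_iff, ← h, isUnit_iff_isUnit_det, det_transpose,
    ← isUnit_iff_isUnit_det]

section LinftyOpNorm

attribute [local instance] Matrix.linftyOpNormedRing Matrix.linftyOpNormedAlgebra

theorem sum_apply_le_nnnorm_map_natCast (B : Matrix ι ι ℕ) (i : ι) :
    ((∑ j, B i j : ℕ) : ℝ≥0) ≤ ‖B.map (Nat.cast : ℕ → ℂ)‖₊ := by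
  rw [linfty_opNNNorm_def]
  refine le_trans ?_ (le_sup (f := fun i => ∑ j, ‖B.map (Nat.cast : ℕ → ℂ) i j‖₊) (mem_univ i))
  simp

theorem natCast_le_spectralRadius_map_pow [Nonempty ι] (A : Matrix ι ι ℕ) {N : ℕ} (hN : N ≠ 0)
    {c : ℕ} (hc : ∀ i, c ≤ ∑ j, (A ^ N) i j) :
    (c : ℝ≥0∞) ≤ spectralRadius ℂ (A.map (Nat.cast : ℕ → ℂ)) ^ N := by
  have : CompleteSpace (Matrix ι ι ℂ) := FiniteDimensional.complete ℂ _
  rw [← spectrum.spectralRadius_pow _ hN, map_natCast_pow]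
  refine spectrum.le_spectralRadius_of_pow_le_nnnorm_pow _ fun m => ?_
  obtain ⟨i⟩ := ‹Nonempty ι›
  calc (c : ℝ≥0) ^ m = ((c ^ m : ℕ) : ℝ≥0) := by push_cast; rfl
    _ ≤ ((∑ j, ((A ^ N) ^ m) i j : ℕ) : ℝ≥0) := by exact_mod_cast pow_le_sum_pow_apply _ hc m i
    _ ≤ _ := by rw [map_natCast_pow, ← pow_mul]; exact sum_apply_le_nnnorm_map_natCast _ i

end LinftyOpNorm

end Matrix

theorem matrixSpectralRadius_transpose {n : ℕ} (A : Matrix (Fin n) (Fin n) ℕ) :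
    matrixSpectralRadius Aᵀ = matrixSpectralRadius A := by
  rw [matrixSpectralRadius, matrixSpectralRadius, spectralRadius, spectralRadius,
    Matrix.transpose_map, Matrix.spectrum_transpose]

namespace IsPerronFrobenius

variable {n : ℕ} {A : Matrix (Fin n) (Fin n) ℕ}

theorem transpose (hA : IsPerronFrobenius A) : IsPerronFrobenius Aᵀ := by
  obtain ⟨k, hk, hpos⟩ := hA
  exact ⟨k, hk, fun i j => by rw [← Matrix.transpose_pow]; exact hpos j i⟩

theorem sum_apply_pos (hA : IsPerronFrobenius A) (i : Fin n) : 0 < ∑ j, A i j := by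
  obtain ⟨k, hk, hpos⟩ := hA
  obtain ⟨k, rfl⟩ := Nat.exists_eq_add_of_lt hk
  obtain ⟨l, hl, -⟩ : ∃ l, 0 < A i l ∧ 0 < (A ^ k) l i := by
    simpa [pow_succ', Matrix.mul_apply, sum_pos_iff, CanonicallyOrderedAdd.mul_pos]
      using hpos i i
  exact lt_of_lt_of_le hl (single_le_sum (fun _ _ => Nat.zero_le _) (mem_univ l))

theorem exists_pow_apply_pos_lt (hA : IsPerronFrobenius A) (i j : Fin n) :
    ∃ k < n, 0 < (A ^ k) i j := by
  obtain ⟨k, -, hpos⟩ := hA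
  simpa using Matrix.exists_pow_apply_pos_lt_card A (hpos i j)

theorem card_add_one_le_matrixSpectralRadius_pow [NeZero n] (hA : IsPerronFrobenius A) :
    (#{i | 2 ≤ ∑ j, A i j} + 1 : ℝ≥0∞) ≤ matrixSpectralRadius A ^ n := by
  have := Matrix.natCast_le_spectralRadius_map_pow A (NeZero.ne n) fun i =>
    Matrix.card_add_one_le_sum_pow_apply A hA.sum_apply_pos (hA.exists_pow_apply_pos_lt i)
  exact_mod_cast this

end IsPerronFrobenius

/-- For an `n × n` Perron–Frobenius matrix `A` with `n ≥ 1`, the number of rows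
whose row sum is at least `2` is at most `λ(A)^n − 1`, and likewise for the number
of columns whose column sum is at least `2`. -/
theorem card_big_rows_cols_le {n : ℕ} (hn : 1 ≤ n)
    (A : Matrix (Fin n) (Fin n) ℕ) (hA : IsPerronFrobenius A) :
    (((Finset.univ.filter fun i => 2 ≤ ∑ j, A i j).card : ℝ≥0∞) ≤
        matrixSpectralRadius A ^ n - 1) ∧
      (((Finset.univ.filter fun j => 2 ≤ ∑ i, A i j).card : ℝ≥0∞) ≤
        matrixSpectralRadius A ^ n - 1) := by
  have : NeZero n := ⟨by omega⟩
  have rows : ∀ B : Matrix (Fin n) (Fin n) ℕ, IsPerronFrobenius B →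
      (#{i | 2 ≤ ∑ j, B i j} : ℝ≥0∞) ≤ matrixSpectralRadius B ^ n - 1 := fun B hB =>
    ENNReal.le_sub_of_add_le_right ENNReal.one_ne_top hB.card_add_one_le_matrixSpectralRadius_pow
  refine ⟨rows A hA, ?_⟩
  rw [← matrixSpectralRadius_transpose]
  exact rows Aᵀ hA.transpose
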